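/- arXiv:math/0303082 — 3 statements merged into one kernel-verified Lean document; each statement's English description precedes it below -/
import Mathlib

section
/- The harmonic cubic P(x) = (x₁² − x₂²)x₃ + 2x₁x₂x₄ on ℝ⁴ is invariant under the one-parameter subgroup of SO(4) consisting of block rotations by angle θ in the (x₁,x₂)-plane and angle 2θ in the (x₃,x₄)-plane, for every θ ∈ ℝ, and also under the diagonal matrix diag(1,−1,1,−1). -/
open MvPolynomial Real

/-- The action of a 4×4 matrix on polynomials in 4 variables: `(A · P)(x) = P(xA)`. -/
noncomputable def matAct (A : Matrix (Fin 4) (Fin 4) ℝ) (P : MvPolynomial (Fin 4) ℝ) :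
    MvPolynomial (Fin 4) ℝ :=
  bind₁ (fun i => ∑ j : Fin 4, C (A j i) * X j) P

/-- 2×2 rotation matrix realizing `x₁ + ix₂ ↦ e^{iθ}(x₁ + ix₂)` under the
row-vector action `(xA)_i = ∑ j, x_j A j i`. -/
noncomputable def rot2 (θ : ℝ) : Matrix (Fin 2) (Fin 2) ℝ :=
  !![Real.cos θ, Real.sin θ; -Real.sin θ, Real.cos θ]

/-- Block rotation by angle `θ₁` in the `(x₁,x₂)`-plane and `θ₂` in the
`(x₃,x₄)`-plane. -/
noncomputable def blockRot (θ₁ θ₂ : ℝ) : Matrix (Fin 4) (Fin 4) ℝ :=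
  Matrix.reindex finSumFinEquiv finSumFinEquiv
    (Matrix.fromBlocks (rot2 θ₁) 0 0 (rot2 θ₂))

lemma blockRot_eq (θ₁ θ₂ : ℝ) : blockRot θ₁ θ₂ =
    !![Real.cos θ₁, Real.sin θ₁, 0, 0; -Real.sin θ₁, Real.cos θ₁, 0, 0;
       0, 0, Real.cos θ₂, Real.sin θ₂; 0, 0, -Real.sin θ₂, Real.cos θ₂] := by
  ext i j
  fin_cases i <;> fin_cases j <;>
    norm_num [blockRot, rot2, Matrix.fromBlocks, finSumFinEquiv, Fin.addCases, Fin.castLT,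
      Fin.subNat, Matrix.vecHead, Matrix.vecTail]

/-- The harmonic cubic `P(x) = (x₁² − x₂²)x₃ + 2x₁x₂x₄` is invariant
under the one-parameter subgroup of SO(4) of rotations by `θ` in the `(x₁,x₂)`-plane
and `2θ` in the `(x₃,x₄)`-plane, and under `diag(1,−1,1,−1)`. -/
theorem o2_invariant_harmonic_cubic :
    (∑ i : Fin 4, pderiv i (pderiv i
        ((X 0 ^ 2 - X 1 ^ 2) * X 2 + 2 * X 0 * X 1 * X 3 : MvPolynomial (Fin 4) ℝ))) = 0 ∧
    (∀ θ : ℝ, matAct (blockRot θ (2 * θ))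
        ((X 0 ^ 2 - X 1 ^ 2) * X 2 + 2 * X 0 * X 1 * X 3)
      = (X 0 ^ 2 - X 1 ^ 2) * X 2 + 2 * X 0 * X 1 * X 3) ∧
    matAct (Matrix.diagonal ![1, -1, 1, -1])
        ((X 0 ^ 2 - X 1 ^ 2) * X 2 + 2 * X 0 * X 1 * X 3)
      = (X 0 ^ 2 - X 1 ^ 2) * X 2 + 2 * X 0 * X 1 * X 3 := by
  refine ⟨?_, ?_, ?_⟩
  · have h2 : ∀ i : Fin 4, pderiv i (2 : MvPolynomial (Fin 4) ℝ) = 0 := fun i => by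
      rw [show (2 : MvPolynomial (Fin 4) ℝ) = C 2 from (map_ofNat C 2).symm, pderiv_C]
    simp [Fin.sum_univ_four, pderiv_mul, pderiv_X, Pi.single_apply, h2]
  · intro θ
    have hsc : (C (Real.cos θ) ^ 2 + C (Real.sin θ) ^ 2 : MvPolynomial (Fin 4) ℝ) = 1 := by
      rw [← map_pow, ← map_pow, ← map_add, Real.cos_sq_add_sin_sq, map_one]
    have key : ∀ i : Fin 4,
        (∑ j : Fin 4, (C ((blockRot θ (2*θ)) j i) * X j : MvPolynomial (Fin 4) ℝ))
        = ![C (cos θ) * X 0 - C (sin θ) * X 1, C (sin θ) * X 0 + C (cos θ) * X 1,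
            C (cos (2*θ)) * X 2 - C (sin (2*θ)) * X 3,
            C (sin (2*θ)) * X 2 + C (cos (2*θ)) * X 3] i := by
      intro i
      rw [blockRot_eq]
      fin_cases i <;>
        simp [Fin.sum_univ_four, map_neg, Matrix.vecHead, Matrix.vecTail] <;> ring
    simp only [matAct, map_add, map_sub, map_mul, map_pow, map_ofNat, bind₁_X_right, key]
    simp only [Matrix.cons_val_zero, Matrix.cons_val_one, Matrix.head_cons,
      Matrix.cons_val_two, Matrix.cons_val_three, Matrix.tail_cons,
      Real.cos_two_mul, Real.sin_two_mul, map_sub, map_mul, map_ofNat, map_one, map_pow]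
    linear_combination ((1 + 2 * C (Real.cos θ) ^ 2) *
        ((X 0 ^ 2 - X 1 ^ 2) * X 2 + 2 * X 0 * X 1 * X 3 : MvPolynomial (Fin 4) ℝ) +
      2 * C (Real.sin θ) * C (Real.cos θ) *
        ((X 0 ^ 2 - X 1 ^ 2) * X 3 - 2 * X 0 * X 1 * X 2 : MvPolynomial (Fin 4) ℝ)) * hsc
  · have key : ∀ i : Fin 4,
        (∑ j : Fin 4, (C ((Matrix.diagonal ![1, -1, 1, -1] : Matrix (Fin 4) (Fin 4) ℝ) j i) * X j
          : MvPolynomial (Fin 4) ℝ))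
        = ![X 0, -X 1, X 2, -X 3] i := by
      intro i
      fin_cases i <;>
        norm_num [Fin.sum_univ_four, Matrix.diagonal_apply, Matrix.vecHead, Matrix.vecTail] <;>
          simp (config := {decide := true})
    simp only [matAct, map_add, map_sub, map_mul, map_pow, map_ofNat, bind₁_X_right, key]
    simp only [Matrix.cons_val_zero, Matrix.cons_val_one, Matrix.head_cons,
      Matrix.cons_val_two, Matrix.cons_val_three, Matrix.tail_cons]
    ring
end

section
/- A harmonic cubic polynomial on ℝ⁴ of the form C = r·x₁(x₁²−x₂²−x₃²−x₄²) + s·x₂x₃x₄ is invariant under the group generated by diag(1,1,−1,−1), diag(1,−1,1,−1), and the permutation matrix sending (x₁,x₂,x₃,x₄) ↦ (x₁,x₃,x₄,x₂), for all real r, s; moreover any cubic polynomial invariant under this group is a linear combination of x₁³, x₁(x₂²+x₃²+x₄²), and x₂x₃x₄. -/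
open MvPolynomial

/-- Permutation matrix realizing `(x₁,x₂,x₃,x₄) ↦ (x₁,x₃,x₄,x₂)` under the
row-vector action `(xA)_i = ∑ j, x_j A j i`. -/
def cycMat : Matrix (Fin 4) (Fin 4) ℝ :=
  !![1,0,0,0; 0,0,0,1; 0,1,0,0; 0,0,1,0]

lemma matAct_d1 (P : MvPolynomial (Fin 4) ℝ) :
    matAct (Matrix.diagonal ![1,1,-1,-1]) P = bind₁ ![X 0, X 1, -X 2, -X 3] P := by
  have h : (fun i => ∑ j : Fin 4, C (Matrix.diagonal ![(1:ℝ),1,-1,-1] j i) * X j)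
      = (![X 0, X 1, -X 2, -X 3] : Fin 4 → MvPolynomial (Fin 4) ℝ) := by
    funext i
    fin_cases i <;> simp [Fin.sum_univ_four, Matrix.diagonal_apply]
  unfold matAct; rw [h]

lemma matAct_d2 (P : MvPolynomial (Fin 4) ℝ) :
    matAct (Matrix.diagonal ![1,-1,1,-1]) P = bind₁ ![X 0, -X 1, X 2, -X 3] P := by
  have h : (fun i => ∑ j : Fin 4, C (Matrix.diagonal ![(1:ℝ),-1,1,-1] j i) * X j)
      = (![X 0, -X 1, X 2, -X 3] : Fin 4 → MvPolynomial (Fin 4) ℝ) := by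
    funext i
    fin_cases i <;> simp [Fin.sum_univ_four, Matrix.diagonal_apply]
  unfold matAct; rw [h]

lemma matAct_cyc (P : MvPolynomial (Fin 4) ℝ) :
    matAct cycMat P = bind₁ ![X 0, X 2, X 3, X 1] P := by
  have h : (fun i => ∑ j : Fin 4, C (cycMat j i) * X j)
      = (![X 0, X 2, X 3, X 1] : Fin 4 → MvPolynomial (Fin 4) ℝ) := by
    funext i
    fin_cases i <;> simp [Fin.sum_univ_four, cycMat, Matrix.vecHead, Matrix.vecTail]
  unfold matAct; rw [h]

noncomputable def mm (a b c d : ℕ) : Fin 4 →₀ ℕ := Finsupp.equivFunOnFinite.symm ![a,b,c,d]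

lemma mm_inj {a b c d a' b' c' d' : ℕ} :
    mm a b c d = mm a' b' c' d' ↔ a = a' ∧ b = b' ∧ c = c' ∧ d = d' := by
  constructor
  · intro h
    have h' : (![a,b,c,d] : Fin 4 → ℕ) = ![a',b',c',d'] :=
      Finsupp.equivFunOnFinite.symm.injective h
    exact ⟨congrFun h' 0, congrFun h' 1, congrFun h' 2, congrFun h' 3⟩
  · rintro ⟨rfl, rfl, rfl, rfl⟩; rfl

lemma eq_mm (v : Fin 4 →₀ ℕ) : v = mm (v 0) (v 1) (v 2) (v 3) := by
  ext i
  fin_cases i <;> simp [mm]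

lemma mm_apply (a b c d : ℕ) :
    mm a b c d 0 = a ∧ mm a b c d 1 = b ∧ mm a b c d 2 = c ∧ mm a b c d 3 = d := by
  refine ⟨?_, ?_, ?_, ?_⟩ <;> simp [mm]

lemma degree_eq (v : Fin 4 →₀ ℕ) : v.degree = v 0 + v 1 + v 2 + v 3 := by
  rw [Finsupp.degree, ← Fin.sum_univ_four v]
  exact Finset.sum_subset (Finset.subset_univ _)
    (fun i _ hi => Finsupp.notMem_support_iff.mp hi)

set_option maxHeartbeats 2000000 in
lemma classify (v : Fin 4 →₀ ℕ) (h : v 0 + v 1 + v 2 + v 3 = 3) :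
    v = mm 3 0 0 0 ∨ v = mm 0 3 0 0 ∨ v = mm 0 0 3 0 ∨ v = mm 0 0 0 3 ∨
    v = mm 2 1 0 0 ∨ v = mm 2 0 1 0 ∨ v = mm 2 0 0 1 ∨
    v = mm 1 2 0 0 ∨ v = mm 1 0 2 0 ∨ v = mm 1 0 0 2 ∨
    v = mm 0 2 1 0 ∨ v = mm 0 2 0 1 ∨ v = mm 0 1 2 0 ∨ v = mm 0 1 0 2 ∨
    v = mm 0 0 2 1 ∨ v = mm 0 0 1 2 ∨
    v = mm 1 1 1 0 ∨ v = mm 1 1 0 1 ∨ v = mm 1 0 1 1 ∨ v = mm 0 1 1 1 := by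
  rw [eq_mm v]
  have h0 : v 0 ≤ 3 := by omega
  have h1 : v 1 ≤ 3 := by omega
  have h2 : v 2 ≤ 3 := by omega
  have h3 : v 3 ≤ 3 := by omega
  interval_cases h0' : v 0 <;> interval_cases h1' : v 1 <;>
    interval_cases h2' : v 2 <;> interval_cases h3' : v 3 <;>
    first
      | omega
      | simp [mm_inj]

lemma coeff_mm_ne (v : Fin 4 →₀ ℕ) (hv : v 0 + v 1 + v 2 + v 3 ≠ 3)
    (a b c d : ℕ) (r : ℝ) (h : a + b + c + d = 3) :
    coeff v (monomial (mm a b c d) r) = 0 := by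
  rw [coeff_monomial, if_neg]
  intro he
  obtain ⟨h0, h1, h2, h3⟩ := mm_apply a b c d
  rw [← he] at hv
  exact hv (by rw [h0, h1, h2, h3]; omega)

set_option maxHeartbeats 2000000 in
lemma expand (P : MvPolynomial (Fin 4) ℝ) (hP : P.IsHomogeneous 3) :
    P = monomial (mm 3 0 0 0) (coeff (mm 3 0 0 0) P)
      + monomial (mm 0 3 0 0) (coeff (mm 0 3 0 0) P)
      + monomial (mm 0 0 3 0) (coeff (mm 0 0 3 0) P)
      + monomial (mm 0 0 0 3) (coeff (mm 0 0 0 3) P)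
      + monomial (mm 2 1 0 0) (coeff (mm 2 1 0 0) P)
      + monomial (mm 2 0 1 0) (coeff (mm 2 0 1 0) P)
      + monomial (mm 2 0 0 1) (coeff (mm 2 0 0 1) P)
      + monomial (mm 1 2 0 0) (coeff (mm 1 2 0 0) P)
      + monomial (mm 1 0 2 0) (coeff (mm 1 0 2 0) P)
      + monomial (mm 1 0 0 2) (coeff (mm 1 0 0 2) P)
      + monomial (mm 0 2 1 0) (coeff (mm 0 2 1 0) P)
      + monomial (mm 0 2 0 1) (coeff (mm 0 2 0 1) P)
      + monomial (mm 0 1 2 0) (coeff (mm 0 1 2 0) P)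
      + monomial (mm 0 1 0 2) (coeff (mm 0 1 0 2) P)
      + monomial (mm 0 0 2 1) (coeff (mm 0 0 2 1) P)
      + monomial (mm 0 0 1 2) (coeff (mm 0 0 1 2) P)
      + monomial (mm 1 1 1 0) (coeff (mm 1 1 1 0) P)
      + monomial (mm 1 1 0 1) (coeff (mm 1 1 0 1) P)
      + monomial (mm 1 0 1 1) (coeff (mm 1 0 1 1) P)
      + monomial (mm 0 1 1 1) (coeff (mm 0 1 1 1) P) := by
  ext v
  by_cases hv : v 0 + v 1 + v 2 + v 3 = 3
  · rcases classify v hv with h|h|h|h|h|h|h|h|h|h|h|h|h|h|h|h|h|h|h|h <;> subst h <;>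
      simp [coeff_add, coeff_monomial, mm_inj]
  · have hvP : coeff v P = 0 := by
      by_contra hne
      exact hv (by rw [← degree_eq, Finsupp.degree_eq_weight_one]; exact hP hne)
    simp only [coeff_add, coeff_mm_ne v hv, hvP]
    norm_num

lemma monomial_mm (a b c d : ℕ) (r : ℝ) :
    monomial (mm a b c d) r = C r * X 0 ^ a * X 1 ^ b * X 2 ^ c * X 3 ^ d := by
  have h : mm a b c d = Finsupp.single 0 a + Finsupp.single 1 b
      + Finsupp.single 2 c + Finsupp.single 3 d := by
    ext i; fin_cases i <;> simp [mm]
  rw [h]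
  simp [X_pow_eq_monomial, monomial_mul, C_mul_monomial]

set_option maxHeartbeats 4000000 in
/-- for all `r, s`, the harmonic cubic
`C = r·x₁(x₁²−x₂²−x₃²−x₄²) + s·x₂x₃x₄` is invariant under the group generated by
`diag(1,1,−1,−1)`, `diag(1,−1,1,−1)` and the permutation `(x₁,x₂,x₃,x₄) ↦ (x₁,x₃,x₄,x₂)`
(the tetrahedral group `𝕋`); conversely every cubic invariant under these three
elements is a linear combination of `x₁³`, `x₁(x₂²+x₃²+x₄²)` and `x₂x₃x₄`. -/
theorem tetrahedral_invariant_cubics :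
    (∀ r s : ℝ,
      matAct (Matrix.diagonal ![1,1,-1,-1])
          (C r * X 0 * (X 0 ^ 2 - X 1 ^ 2 - X 2 ^ 2 - X 3 ^ 2) + C s * X 1 * X 2 * X 3)
        = C r * X 0 * (X 0 ^ 2 - X 1 ^ 2 - X 2 ^ 2 - X 3 ^ 2) + C s * X 1 * X 2 * X 3 ∧
      matAct (Matrix.diagonal ![1,-1,1,-1])
          (C r * X 0 * (X 0 ^ 2 - X 1 ^ 2 - X 2 ^ 2 - X 3 ^ 2) + C s * X 1 * X 2 * X 3)
        = C r * X 0 * (X 0 ^ 2 - X 1 ^ 2 - X 2 ^ 2 - X 3 ^ 2) + C s * X 1 * X 2 * X 3 ∧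
      matAct cycMat
          (C r * X 0 * (X 0 ^ 2 - X 1 ^ 2 - X 2 ^ 2 - X 3 ^ 2) + C s * X 1 * X 2 * X 3)
        = C r * X 0 * (X 0 ^ 2 - X 1 ^ 2 - X 2 ^ 2 - X 3 ^ 2) + C s * X 1 * X 2 * X 3) ∧
    (∀ P : MvPolynomial (Fin 4) ℝ, P.IsHomogeneous 3 →
      matAct (Matrix.diagonal ![1,1,-1,-1]) P = P →
      matAct (Matrix.diagonal ![1,-1,1,-1]) P = P →
      matAct cycMat P = P →
      ∃ a b c : ℝ, P = C a * X 0 ^ 3 + C b * X 0 * (X 1 ^ 2 + X 2 ^ 2 + X 3 ^ 2)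
        + C c * X 1 * X 2 * X 3) := by
  constructor
  · intro r s
    refine ⟨?_, ?_, ?_⟩
    · rw [matAct_d1]
      simp only [map_add, map_mul, map_sub, map_pow, bind₁_X_right, bind₁_C_right,
        Matrix.cons_val_zero, Matrix.cons_val_one, Matrix.head_cons, Matrix.cons_val_two,
        Matrix.cons_val_three, Matrix.tail_cons]
      ring
    · rw [matAct_d2]
      simp only [map_add, map_mul, map_sub, map_pow, bind₁_X_right, bind₁_C_right,
        Matrix.cons_val_zero, Matrix.cons_val_one, Matrix.head_cons, Matrix.cons_val_two,
        Matrix.cons_val_three, Matrix.tail_cons]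
      ring
    · rw [matAct_cyc]
      simp only [map_add, map_mul, map_sub, map_pow, bind₁_X_right, bind₁_C_right,
        Matrix.cons_val_zero, Matrix.cons_val_one, Matrix.head_cons, Matrix.cons_val_two,
        Matrix.cons_val_three, Matrix.tail_cons]
      ring
  · intro P hP h1 h2 h3
    rw [matAct_d1] at h1
    rw [matAct_d2] at h2
    rw [matAct_cyc] at h3
    have hPX := expand P hP
    simp only [monomial_mm] at hPX
    rw [hPX] at h1 h2 h3
    simp only [map_add, map_mul, map_pow, bind₁_X_right, bind₁_C_right,
      Matrix.cons_val_zero, Matrix.cons_val_one, Matrix.head_cons, Matrix.cons_val_two,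
      Matrix.cons_val_three, Matrix.tail_cons] at h1 h2 h3
    have hz2 : coeff (mm 0 3 0 0) P = 0 := by
      have h := congrArg (fun Q => constantCoeff (pderiv 1 (pderiv 1 (pderiv 1 Q)))) h2
      simp [pderiv_mul, pderiv_pow, pderiv_X, pderiv_C, map_ofNat] at h
      linarith
    have hz3 : coeff (mm 0 0 3 0) P = 0 := by
      have h := congrArg (fun Q => constantCoeff (pderiv 2 (pderiv 2 (pderiv 2 Q)))) h1
      simp [pderiv_mul, pderiv_pow, pderiv_X, pderiv_C, map_ofNat] at h
      linarith
    have hz4 : coeff (mm 0 0 0 3) P = 0 := by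
      have h := congrArg (fun Q => constantCoeff (pderiv 3 (pderiv 3 (pderiv 3 Q)))) h1
      simp [pderiv_mul, pderiv_pow, pderiv_X, pderiv_C, map_ofNat] at h
      linarith
    have hz5 : coeff (mm 2 1 0 0) P = 0 := by
      have h := congrArg (fun Q => constantCoeff (pderiv 0 (pderiv 0 (pderiv 1 Q)))) h2
      simp [pderiv_mul, pderiv_pow, pderiv_X, pderiv_C, map_ofNat] at h
      linarith
    have hz6 : coeff (mm 2 0 1 0) P = 0 := by
      have h := congrArg (fun Q => constantCoeff (pderiv 0 (pderiv 0 (pderiv 2 Q)))) h1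
      simp [pderiv_mul, pderiv_pow, pderiv_X, pderiv_C, map_ofNat] at h
      linarith
    have hz7 : coeff (mm 2 0 0 1) P = 0 := by
      have h := congrArg (fun Q => constantCoeff (pderiv 0 (pderiv 0 (pderiv 3 Q)))) h1
      simp [pderiv_mul, pderiv_pow, pderiv_X, pderiv_C, map_ofNat] at h
      linarith
    have hz11 : coeff (mm 0 2 1 0) P = 0 := by
      have h := congrArg (fun Q => constantCoeff (pderiv 1 (pderiv 1 (pderiv 2 Q)))) h1
      simp [pderiv_mul, pderiv_pow, pderiv_X, pderiv_C, map_ofNat] at h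
      linarith
    have hz12 : coeff (mm 0 2 0 1) P = 0 := by
      have h := congrArg (fun Q => constantCoeff (pderiv 1 (pderiv 1 (pderiv 3 Q)))) h1
      simp [pderiv_mul, pderiv_pow, pderiv_X, pderiv_C, map_ofNat] at h
      linarith
    have hz13 : coeff (mm 0 1 2 0) P = 0 := by
      have h := congrArg (fun Q => constantCoeff (pderiv 1 (pderiv 2 (pderiv 2 Q)))) h2
      simp [pderiv_mul, pderiv_pow, pderiv_X, pderiv_C, map_ofNat] at h
      linarith
    have hz14 : coeff (mm 0 1 0 2) P = 0 := by
      have h := congrArg (fun Q => constantCoeff (pderiv 1 (pderiv 3 (pderiv 3 Q)))) h2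
      simp [pderiv_mul, pderiv_pow, pderiv_X, pderiv_C, map_ofNat] at h
      linarith
    have hz15 : coeff (mm 0 0 2 1) P = 0 := by
      have h := congrArg (fun Q => constantCoeff (pderiv 2 (pderiv 2 (pderiv 3 Q)))) h1
      simp [pderiv_mul, pderiv_pow, pderiv_X, pderiv_C, map_ofNat] at h
      linarith
    have hz16 : coeff (mm 0 0 1 2) P = 0 := by
      have h := congrArg (fun Q => constantCoeff (pderiv 2 (pderiv 3 (pderiv 3 Q)))) h1
      simp [pderiv_mul, pderiv_pow, pderiv_X, pderiv_C, map_ofNat] at h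
      linarith
    have hz17 : coeff (mm 1 1 1 0) P = 0 := by
      have h := congrArg (fun Q => constantCoeff (pderiv 0 (pderiv 1 (pderiv 2 Q)))) h1
      simp [pderiv_mul, pderiv_pow, pderiv_X, pderiv_C, map_ofNat] at h
      linarith
    have hz18 : coeff (mm 1 1 0 1) P = 0 := by
      have h := congrArg (fun Q => constantCoeff (pderiv 0 (pderiv 1 (pderiv 3 Q)))) h1
      simp [pderiv_mul, pderiv_pow, pderiv_X, pderiv_C, map_ofNat] at h
      linarith
    have hz19 : coeff (mm 1 0 1 1) P = 0 := by
      have h := congrArg (fun Q => constantCoeff (pderiv 0 (pderiv 2 (pderiv 3 Q)))) h2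
      simp [pderiv_mul, pderiv_pow, pderiv_X, pderiv_C, map_ofNat] at h
      linarith
    have hb9 : coeff (mm 1 0 2 0) P = coeff (mm 1 2 0 0) P := by
      have h := congrArg (fun Q => constantCoeff (pderiv 0 (pderiv 2 (pderiv 2 Q)))) h3
      simp [pderiv_mul, pderiv_pow, pderiv_X, pderiv_C, map_ofNat] at h
      linarith
    have hb10 : coeff (mm 1 0 0 2) P = coeff (mm 1 2 0 0) P := by
      have h := congrArg (fun Q => constantCoeff (pderiv 0 (pderiv 3 (pderiv 3 Q)))) h3
      simp [pderiv_mul, pderiv_pow, pderiv_X, pderiv_C, map_ofNat] at h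
      linarith
    refine ⟨coeff (mm 3 0 0 0) P, coeff (mm 1 2 0 0) P, coeff (mm 0 1 1 1) P, ?_⟩
    conv_lhs => rw [hPX]
    rw [hz2, hz3, hz4, hz5, hz6, hz7, hz11, hz12, hz13, hz14, hz15, hz16,
      hz17, hz18, hz19, hb9, hb10]
    simp only [map_zero, zero_mul, pow_zero, pow_one, mul_one, one_mul]
    ring
end

section
/- The polynomial C(x) = x₂x₃x₄ is a harmonic cubic whose stabilizer in SO(4) contains the element of SO(4) given by x ↦ −(1+i)/√2 · x · (1−i)/√2 (quaternion multiplication on ℝ⁴ ≅ ℍ), i.e., by [o,−o] with o = (1+i)/√2, which does not fix the polynomial x₁(x₁²−x₂²−x₃²−x₄²). -/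
open MvPolynomial

/-- The unit quaternion `o = (1 + i)/√2`. -/
noncomputable def oQ : Quaternion ℝ := (Real.sqrt 2)⁻¹ • (⟨1, 1, 0, 0⟩ : Quaternion ℝ)

/-- The element `[o, −o]` of SO(4): `x ↦ −(1+i)/√2 · x · (1−i)/√2 = −(o x (star o))`,
as an `ℝ`-linear map of `ℍ ≅ ℝ⁴`. -/
noncomputable def gOct : Quaternion ℝ →ₗ[ℝ] Quaternion ℝ :=
  -((LinearMap.mulRight ℝ (star oQ)).comp (LinearMap.mulLeft ℝ oQ))

/-- `x₂x₃x₄` as a function of a quaternion `x = x₁ + x₂i + x₃j + x₄k`. -/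
def Cfun (x : Quaternion ℝ) : ℝ := x.imI * x.imJ * x.imK

/-- `x₁(x₁²−x₂²−x₃²−x₄²)` as a function of a quaternion. -/
def Dfun (x : Quaternion ℝ) : ℝ := x.re * (x.re ^ 2 - x.imI ^ 2 - x.imJ ^ 2 - x.imK ^ 2)

/-- Explicit formula for `gOct`. -/
lemma gOct_apply (x : Quaternion ℝ) : gOct x = ⟨-x.re, -x.imI, x.imK, -x.imJ⟩ := by
  have h2 : (Real.sqrt 2)⁻¹ * (Real.sqrt 2)⁻¹ = 1/2 := by
    rw [← mul_inv, Real.mul_self_sqrt (by norm_num)]; norm_num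
  have ho : oQ.re = (Real.sqrt 2)⁻¹ ∧ oQ.imI = (Real.sqrt 2)⁻¹ ∧ oQ.imJ = 0 ∧ oQ.imK = 0 := by
    refine ⟨?_, ?_, ?_, ?_⟩ <;> simp [oQ]
  simp only [gOct, LinearMap.neg_apply, LinearMap.comp_apply, LinearMap.mulLeft_apply,
    LinearMap.mulRight_apply]
  apply QuaternionAlgebra.ext <;>
    simp [ho, Quaternion.re_mul, Quaternion.imI_mul, Quaternion.imJ_mul,
      Quaternion.imK_mul] <;> ring_nf <;>
    rw [show (Real.sqrt 2)⁻¹^2 = (Real.sqrt 2)⁻¹ * (Real.sqrt 2)⁻¹ from sq _, h2] <;> ring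

/-- The basis `1, i, j, k` of the quaternions. -/
noncomputable def bIJK : Module.Basis (Fin 4) ℝ (Quaternion ℝ) := QuaternionAlgebra.basisOneIJK (-1) 0 (-1)

lemma bIJK_repr (q : Quaternion ℝ) (i : Fin 4) :
    (bIJK.repr q) i = ![q.re, q.imI, q.imJ, q.imK] i :=
  congrFun (QuaternionAlgebra.coe_basisOneIJK_repr (c₁ := (-1:ℝ)) (c₂ := 0) (c₃ := -1) q) i

lemma bIJK_comp (j i : Fin 4) :
    ![(bIJK j).re, (bIJK j).imI, (bIJK j).imJ, (bIJK j).imK] i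
      = if j = i then 1 else 0 := by
  rw [← bIJK_repr, Module.Basis.repr_self, Finsupp.single_apply]

lemma gOct_det : LinearMap.det gOct = 1 := by
  rw [← LinearMap.det_toMatrix bIJK]
  have : LinearMap.toMatrix bIJK bIJK gOct =
      !![-1,0,0,0; 0,-1,0,0; 0,0,0,1; 0,0,-1,0] := by
    ext i j
    rw [LinearMap.toMatrix_apply, bIJK_repr, gOct_apply]
    have h0 := bIJK_comp j 0
    have h1 := bIJK_comp j 1
    have h2 := bIJK_comp j 2
    have h3 := bIJK_comp j 3
    simp only [Matrix.cons_val_zero, Matrix.cons_val_one, Matrix.head_cons,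
      Matrix.cons_val_two, Matrix.cons_val_three, Matrix.tail_cons] at h0 h1 h2 h3
    fin_cases i <;> fin_cases j <;>
      simp_all [Matrix.vecHead, Matrix.vecTail]
  rw [this]
  norm_num [Matrix.det_succ_row_zero, Fin.sum_univ_succ, Matrix.cons_val_two, Matrix.tail_cons]

/-- `C(x) = x₂x₃x₄` is a harmonic cubic; the map
`x ↦ −(1+i)/√2 · x · (1−i)/√2` (i.e. `[o,−o]` with `o = (1+i)/√2`) is an element of
SO(4) (a norm-preserving linear map of determinant 1) which fixes `C` but does not
fix the polynomial `x₁(x₁²−x₂²−x₃²−x₄²)`. -/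
theorem octahedral_plus_stabilizes_x2x3x4 :
    -- harmonicity of x₂x₃x₄
    (∑ i : Fin 4, pderiv i (pderiv i (X 1 * X 2 * X 3 : MvPolynomial (Fin 4) ℝ))) = 0 ∧
    -- gOct is in SO(4)
    (∀ x : Quaternion ℝ, ‖gOct x‖ = ‖x‖) ∧ LinearMap.det gOct = 1 ∧
    -- gOct fixes C
    (∀ x : Quaternion ℝ, Cfun (gOct x) = Cfun x) ∧
    -- gOct does not fix x₁(x₁²−x₂²−x₃²−x₄²)
    ¬ (∀ x : Quaternion ℝ, Dfun (gOct x) = Dfun x) := by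
  refine ⟨?_, ?_, gOct_det, ?_, ?_⟩
  · simp [Fin.sum_univ_four, pderiv_mul, pderiv_X, Pi.single_apply]
  · intro x
    rw [← Real.sqrt_mul_self (norm_nonneg (gOct x)), ← Real.sqrt_mul_self (norm_nonneg x),
      ← Quaternion.normSq_eq_norm_mul_self, ← Quaternion.normSq_eq_norm_mul_self,
      Quaternion.normSq_def', Quaternion.normSq_def', gOct_apply]
    simp [Quaternion.normSq_def']; ring
  · intro x
    rw [gOct_apply]
    simp [Cfun]; ring_nf
  · intro h
    have h1 := h 1
    rw [gOct_apply] at h1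
    simp [Dfun, Quaternion.re_one, Quaternion.imI_one, Quaternion.imJ_one, Quaternion.imK_one] at h1
    norm_num at h1
end
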